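/- If U and V are commutative languages over a finite alphabet Σ, each recognized by an aperiodic DFA, then the shuffle U ⧢ V is recognized by an aperiodic DFA; i.e., the shuffle of two commutative aperiodic (star-free) languages is aperiodic (star-free). -/

import Mathlib

open List

def IsCommutativeLang {α : Type} (L : Language α) : Prop :=
  ∀ u v : List α, u ~ v → (u ∈ L ↔ v ∈ L)

def UpClosure {α : Type} (L : Language α) : Language α :=
  {v | ∃ u ∈ L, u <+ v}

def DownClosure {α : Type} (L : Language α) : Language α :=
  {u | ∃ v ∈ L, u <+ v}

def UpInterior {α : Type} (L : Language α) : Language α :=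
  {w | ∃ U : Language α, (∀ x ∈ U, x ∈ L) ∧ UpClosure U = U ∧ w ∈ U}

def DownInterior {α : Type} (L : Language α) : Language α :=
  {w | ∃ U : Language α, (∀ x ∈ U, x ∈ L) ∧ DownClosure U = U ∧ w ∈ U}

def RecognizedBy {α : Type} (L : Language α) (n : ℕ) : Prop :=
  ∃ (σ : Type) (_ : Fintype σ) (M : DFA α σ), Fintype.card σ = n ∧ M.accepts = L

noncomputable def sc {α : Type} (L : Language α) : ℕ :=
  sInf {n | RecognizedBy L n}

def Nerode {α : Type} (L : Language α) (u v : List α) : Prop :=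
  ∀ x : List α, u ++ x ∈ L ↔ v ++ x ∈ L

inductive IsShuffle {α : Type} : List α → List α → List α → Prop
  | nil : IsShuffle [] [] []
  | left (x : α) {u v w : List α} : IsShuffle u v w → IsShuffle (x :: u) v (x :: w)
  | right (y : α) {u v w : List α} : IsShuffle u v w → IsShuffle u (y :: v) (y :: w)

def Shuffle {α : Type} (U V : Language α) : Language α :=
  {w | ∃ u ∈ U, ∃ v ∈ V, IsShuffle u v w}

def IsPermDFA {α σ : Type} (M : DFA α σ) : Prop :=
  ∀ a : α, Function.Bijective fun q => M.step q a

def IsGroupLang {α : Type} (L : Language α) : Prop :=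
  ∃ (σ : Type) (_ : Fintype σ) (M : DFA α σ), IsPermDFA M ∧ M.accepts = L

def wpow {α : Type} (w : List α) (n : ℕ) : List α :=
  (List.replicate n w).flatten

def IsAperiodicDFA {α σ : Type} (M : DFA α σ) : Prop :=
  ∀ (q : σ) (w : List α) (n : ℕ), 1 ≤ n → M.evalFrom q (wpow w n) = q → M.evalFrom q w = q

def IsAperiodicLang {α : Type} (L : Language α) : Prop :=
  ∃ (σ : Type) (_ : Fintype σ) (M : DFA α σ), IsAperiodicDFA M ∧ M.accepts = L

def ShuffleList {α : Type} : List (Language α) → Language α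
  | [] => {([] : List α)}
  | L :: Ls => Shuffle L (ShuffleList Ls)

def UnaryGroupLang {α : Type} (a : α) (U : Language α) : Prop :=
  (∀ w ∈ U, ∀ x ∈ w, x = a) ∧
  ∃ (σ : Type) (_ : Fintype σ) (M : DFA Unit σ), IsPermDFA M ∧
    ∀ n : ℕ, (List.replicate n a ∈ U ↔ List.replicate n () ∈ M.accepts)

def UnaryAperiodicLang {α : Type} (a : α) (U : Language α) : Prop :=
  (∀ w ∈ U, ∀ x ∈ w, x = a) ∧
  ∃ (σ : Type) (_ : Fintype σ) (M : DFA Unit σ), IsAperiodicDFA M ∧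
    ∀ n : ℕ, (List.replicate n a ∈ U ↔ List.replicate n () ∈ M.accepts)

/-!
A commutative language recognized by an aperiodic automaton with `N` states is determined by the
letter counts of its words capped at `N`: a commutative language only depends on the counts, and
in an aperiodic automaton the states reached after `a ^ k` stabilise once `k ≥ N`. Conversely, a
language determined by capped counts is recognized by the aperiodic automaton that counts each
letter up to the cap. A word lies in the shuffle of two commutative languages exactly when its
letter counts split into counts of a word of `U` and of a word of `V`; if the caps for `U` and
`V` are `NU` and `NV`, any such split of counts can be transported to every other count vector
with the same counts capped at `NU + NV`, so the shuffle is again determined by capped counts.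
-/

theorem Function.iterate_eq_iterate_card_of_aperiodic {σ : Type} [Fintype σ] (f : σ → σ)
    (hf : ∀ q n, 1 ≤ n → f^[n] q = q → f q = q) (q : σ) {k : ℕ} (hk : Fintype.card σ ≤ k) :
    f^[k] q = f^[Fintype.card σ] q := by
  set N := Fintype.card σ
  obtain ⟨i, j, hij, hj, hcycle⟩ : ∃ i j : ℕ, i < j ∧ j ≤ N ∧ f^[i] q = f^[j] q := by
    obtain ⟨i, j, hne, heq⟩ :=
      Fintype.exists_ne_map_eq_of_card_lt (fun i : Fin (N + 1) => f^[i] q) (by simp [N])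
    rcases lt_or_gt_of_ne (Fin.val_injective.ne hne) with h | h
    · exact ⟨i, j, h, Nat.lt_succ_iff.mp j.isLt, heq⟩
    · exact ⟨j, i, h, Nat.lt_succ_iff.mp i.isLt, heq.symm⟩
  have hfix : f (f^[i] q) = f^[i] q := by
    refine hf _ (j - i) (by omega) ?_
    rw [← Function.iterate_add_apply, Nat.sub_add_cancel hij.le, hcycle]
  have hstable : ∀ m, i ≤ m → f^[m] q = f^[i] q := fun m hm => by
    rw [← Nat.sub_add_cancel hm, Function.iterate_add_apply, Function.iterate_fixed hfix]
  rw [hstable k (by omega), hstable N (by omega)]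

theorem DFA.evalFrom_replicate {α σ : Type} (M : DFA α σ) (q : σ) (a : α) (k : ℕ) :
    M.evalFrom q (replicate k a) = (M.step · a)^[k] q := by
  induction k generalizing q with
  | zero => rfl
  | succ k ih => exact ih (M.step q a)

theorem IsAperiodicDFA.evalFrom_replicate_min {α σ : Type} [Fintype σ] {M : DFA α σ}
    (hM : IsAperiodicDFA M) (q : σ) (a : α) (k : ℕ) :
    M.evalFrom q (replicate k a) = M.evalFrom q (replicate (min k (Fintype.card σ)) a) := by
  rcases le_total k (Fintype.card σ) with hk | hk
  · rw [min_eq_left hk]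
  · rw [min_eq_right hk, DFA.evalFrom_replicate, DFA.evalFrom_replicate]
    refine Function.iterate_eq_iterate_card_of_aperiodic _ (fun p n hn hp => ?_) q hk
    have hpow : wpow [a] n = replicate n a := by simp [wpow]
    exact hM p [a] n hn (by rwa [hpow, DFA.evalFrom_replicate])

noncomputable def ofCounts {α : Type} [Fintype α] (f : α → ℕ) : List α :=
  Finset.univ.toList.flatMap fun a => replicate (f a) a

theorem IsAperiodicDFA.evalFrom_ofCounts_min {α σ : Type} [Fintype α] [Fintype σ] {M : DFA α σ}
    (hM : IsAperiodicDFA M) (q : σ) (f : α → ℕ) :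
    M.evalFrom q (ofCounts f) = M.evalFrom q (ofCounts fun a => min (f a) (Fintype.card σ)) := by
  unfold ofCounts
  induction (Finset.univ : Finset α).toList generalizing q with
  | nil => rfl
  | cons b l ih => simp only [List.flatMap_cons, DFA.evalFrom_of_append,
      hM.evalFrom_replicate_min q b (f b), ih]

section Counts

variable {α : Type} [DecidableEq α]

theorem count_wpow (w : List α) (n : ℕ) (a : α) : (wpow w n).count a = n * w.count a := by
  simp [wpow, List.count_flatten]

def HasCountThreshold (L : Language α) (N : ℕ) : Prop :=
  ∀ u v : List α, (∀ a, min (u.count a) N = min (v.count a) N) → u ∈ L → v ∈ L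

theorem IsShuffle.count_eq {u v w : List α} (h : IsShuffle u v w) (a : α) :
    w.count a = u.count a + v.count a := by
  induction h with
  | nil => rfl
  | left x _ ih => simp only [List.count_cons, ih]; omega
  | right y _ ih => simp only [List.count_cons, ih]; omega

theorem exists_isShuffle_of_le {w : List α} {s : Multiset α} (hs : s ≤ w) :
    ∃ u v, IsShuffle u v w ∧ (u : Multiset α) = s ∧ (v : Multiset α) = w - s := by
  induction w generalizing s with
  | nil =>
    obtain rfl := Multiset.le_zero.mp hs
    exact ⟨[], [], .nil, rfl, rfl⟩
  | cons x w ih =>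
    by_cases hx : x ∈ s
    · have hle : s.erase x ≤ w := by simpa using Multiset.erase_le_erase x hs
      obtain ⟨u, v, hshuf, hu, hv⟩ := ih hle
      refine ⟨x :: u, v, .left x hshuf, by rw [← Multiset.cons_coe, hu, Multiset.cons_erase hx], ?_⟩
      conv_rhs => rw [← Multiset.cons_erase hx]
      simp [Multiset.sub_cons, hv]
    · rw [← Multiset.cons_coe, Multiset.le_cons_of_notMem hx] at hs
      obtain ⟨u, v, hshuf, hu, hv⟩ := ih hs
      refine ⟨u, x :: v, .right x hshuf, hu, ?_⟩
      rw [← Multiset.cons_coe, ← Multiset.cons_coe, hv, Multiset.cons_sub_of_le x hs]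

/-- How a split `c = cU + cV` of one letter count is moved to another count `c'` with the same
cap at `NU + NV`, keeping the caps of both parts. -/
theorem Nat.exists_split_of_min_eq {c c' cU cV NU NV : ℕ} (hc : c = cU + cV)
    (hmin : min c (NU + NV) = min c' (NU + NV)) :
    ∃ k ≤ c', min k NU = min cU NU ∧ min (c' - k) NV = min cV NV := by
  by_cases hcc : c' = c
  · exact ⟨cU, by omega, rfl, by rw [hcc, hc, Nat.add_sub_cancel_left]⟩
  · by_cases hU : NU ≤ cU
    · exact ⟨c' - min cV NV, by omega, by omega, by omega⟩
    · exact ⟨cU, by omega, rfl, by omega⟩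

variable [Fintype α]

@[simp]
theorem count_ofCounts (f : α → ℕ) (a : α) : (ofCounts f).count a = f a := by
  simp [ofCounts, List.count_flatMap, List.count_replicate]

theorem perm_ofCounts_count (w : List α) : w ~ ofCounts (w.count ·) :=
  List.perm_iff_count.mpr fun a => (count_ofCounts (w.count ·) a).symm

theorem IsCommutativeLang.exists_hasCountThreshold {L : Language α} (hc : IsCommutativeLang L)
    (ha : IsAperiodicLang L) : ∃ N, HasCountThreshold L N := by
  obtain ⟨σ, _, M, hM, rfl⟩ := ha
  have hcap : ∀ w, w ∈ M.accepts ↔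
      ofCounts (fun a => min (w.count a) (Fintype.card σ)) ∈ M.accepts := fun w => by
    rw [hc w _ (perm_ofCounts_count w), DFA.mem_accepts, DFA.mem_accepts]
    exact Iff.of_eq (congrArg (· ∈ M.accept) (hM.evalFrom_ofCounts_min M.start _))
  refine ⟨Fintype.card σ, fun u v huv hu => ?_⟩
  rwa [hcap, ← funext huv, ← hcap]

theorem HasCountThreshold.shuffle {U V : Language α} {NU NV : ℕ} (hU : HasCountThreshold U NU)
    (hV : HasCountThreshold V NV) : HasCountThreshold (Shuffle U V) (NU + NV) := by
  rintro w w' hww' ⟨u, hu, v, hv, hshuf⟩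
  choose k hk hkU hkV using fun a =>
    Nat.exists_split_of_min_eq (hshuf.count_eq a) (hww' a)
  have hle : (ofCounts k : Multiset α) ≤ w' :=
    Multiset.le_iff_count.mpr fun a => by simpa using hk a
  obtain ⟨u', v', hshuf', hu', hv'⟩ := exists_isShuffle_of_le hle
  have hcu' : ∀ a, u'.count a = k a := fun a => by
    rw [← Multiset.coe_count, hu', Multiset.coe_count, count_ofCounts]
  have hcv' : ∀ a, v'.count a = w'.count a - k a := fun a => by
    rw [← Multiset.coe_count, hv', Multiset.count_sub, Multiset.coe_count, Multiset.coe_count,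
      count_ofCounts]
  exact ⟨u', hU u u' (fun a => by rw [hcu', hkU]) hu,
    v', hV v v' (fun a => by rw [hcv', hkV]) hv, hshuf'⟩

def countDFA (T : ℕ) (L : Language α) : DFA α (α → Fin (T + 1)) where
  step q x b := ⟨min (q b + if x = b then 1 else 0) T, by omega⟩
  start _ := 0
  accept := {q | ofCounts (fun a => (q a : ℕ)) ∈ L}

theorem countDFA_evalFrom (T : ℕ) (L : Language α) (q : α → Fin (T + 1)) (w : List α) (b : α) :
    ((countDFA T L).evalFrom q w b : ℕ) = min (q b + w.count b) T := by
  induction w generalizing q with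
  | nil => simpa using (q b).is_le
  | cons x w ih =>
    rw [DFA.evalFrom_cons, ih, List.count_cons]
    simp only [countDFA, beq_iff_eq]
    omega

theorem isAperiodicDFA_countDFA (T : ℕ) (L : Language α) : IsAperiodicDFA (countDFA T L) := by
  intro q w n hn hq
  funext b
  have hb := congrArg (fun q => (q b : ℕ)) hq
  simp only [countDFA_evalFrom, count_wpow] at hb
  have : w.count b ≤ n * w.count b := Nat.le_mul_of_pos_left _ hn
  ext
  rw [countDFA_evalFrom]
  omega

theorem HasCountThreshold.isAperiodicLang {L : Language α} {T : ℕ} (hL : HasCountThreshold L T) :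
    IsAperiodicLang L := by
  refine ⟨_, inferInstance, countDFA T L, isAperiodicDFA_countDFA T L, ?_⟩
  ext w
  have hcap : ∀ a, ((countDFA T L).eval w a : ℕ) = min (w.count a) T := fun a =>
    (countDFA_evalFrom T L _ w a).trans (by simp [countDFA])
  rw [DFA.mem_accepts]
  change ofCounts (fun a => ((countDFA T L).eval w a : ℕ)) ∈ L ↔ w ∈ L
  simp only [hcap]
  constructor <;> apply hL <;> simp

end Counts

/-- the shuffle of two commutative aperiodic (star-free) languages is
aperiodic. -/
theorem shuffle_aperiodic {α : Type} [Fintype α] (U V : Language α)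
    (hcU : IsCommutativeLang U) (hcV : IsCommutativeLang V)
    (haU : IsAperiodicLang U) (haV : IsAperiodicLang V) :
    IsAperiodicLang (Shuffle U V) := by
  classical
  obtain ⟨NU, hU⟩ := hcU.exists_hasCountThreshold haU
  obtain ⟨NV, hV⟩ := hcV.exists_hasCountThreshold haV
  exact (hU.shuffle hV).isAperiodicLang
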